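/- Under hypothesis (H), the Martin kernel K along a geodesic ray γ from o, defined by K(x) = G(x,π(x))/G(o,π(x)), is a positive harmonic function with K(o) = 1: K(x) > 0 and ∑_{y ∼ x} p(x,y) K(y) = K(x) for all x ∈ S. -/

import Mathlib

/-!
In a tree, the projection `π = γ (k y)` lies on the geodesics from `y` and from `o = γ 0` to every
later ray vertex `γ N`, so it separates both from `γ N`. Splitting walks at their first visit to a
separating vertex `a` gives `G(x,w) = F(x,a) G(a,w)`, hence `G(x,a) / G(y,a) = G(x,w) / G(y,w)`
and `K(y) = G(y, γ N) / G(o, γ N)` whenever `k y ≤ N`. Taking `N` beyond the projections of `x`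
and of its neighbours, harmonicity at `x` is the first-step identity `G(x,w) = ∑ p(x,z) G(z,w)`,
valid for `x ≠ w`.

Finiteness of `G` is where (H) enters: with `λ = 1 - 2η`, `P λ^d(y,·) ≤ (1 - 2η²) λ^d(y,·)`,
since from `x ≠ y` exactly one neighbour is closer to `y` and it carries mass at most `λ / 2`;
so `p_n(x,y)` decays geometrically.
-/

open scoped Classical

noncomputable section

/-- The `n`-step transition probabilities of the nearest-neighbour walk with
one-step transition probabilities `p`. -/
def pn {S : Type*} (p : S → S → ℝ) : ℕ → S → S → ℝ
  | 0, x, y => if x = y then 1 else 0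
  | n + 1, x, y => ∑' z, p x z * pn p n z y

/-- The Green function `G(x,y) = ∑_n p_n(x,y)`. -/
def green {S : Type*} (p : S → S → ℝ) (x y : S) : ℝ := ∑' n, pn p n x y

open Finset

namespace SimpleGraph

variable {V : Type*} {G : SimpleGraph V}

def Separates (G : SimpleGraph V) (a x w : V) : Prop :=
  ∀ q : G.Walk x w, a ∈ q.support

theorem separates_self_right (a x : V) : G.Separates a x a := fun q => q.end_mem_support

theorem Separates.eq_of_self {a x : V} (h : G.Separates a x x) : a = x := by
  simpa using h .nil

theorem Separates.of_adj {a x z w : V} (h : G.Separates a x w) (hxa : x ≠ a) (hxz : G.Adj x z) :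
    G.Separates a z w := fun q => by
  simpa [Ne.symm hxa] using h (.cons hxz q)

theorem IsAcyclic.length_eq_dist_of_isPath (hG : G.IsAcyclic) {u v : V} {q : G.Walk u v}
    (hq : q.IsPath) : q.length = G.dist u v := by
  obtain ⟨r, hr, hrl⟩ := q.reachable.exists_path_of_dist
  obtain rfl : q = r :=
    congrArg Subtype.val ((hG.subsingleton_path u v).elim ⟨q, hq⟩ ⟨r, hr⟩)
  exact hrl

theorem IsAcyclic.dist_add_dist_of_mem_support (hG : G.IsAcyclic) {u v a : V} {q : G.Walk u v}
    (hq : q.IsPath) (ha : a ∈ q.support) : G.dist u a + G.dist a v = G.dist u v := by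
  rw [← hG.length_eq_dist_of_isPath (hq.takeUntil ha),
    ← hG.length_eq_dist_of_isPath (hq.dropUntil ha), ← hG.length_eq_dist_of_isPath hq,
    ← Walk.length_append, q.take_spec ha]

theorem IsAcyclic.eq_of_adj_of_dist_eq_add_one (hG : G.IsAcyclic) {w x z₁ z₂ : V}
    (h₁ : G.Adj x z₁) (h₂ : G.Adj x z₂) (d₁ : G.dist w x = G.dist w z₁ + 1)
    (d₂ : G.dist w x = G.dist w z₂ + 1) : z₁ = z₂ := by
  have geodesic_through {z : V} (h : G.Adj x z) (d : G.dist w x = G.dist w z + 1) :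
      ∃ q : G.Walk x w, q.IsPath ∧ q.snd = z := by
    have hzw : G.Reachable z w :=
      h.symm.reachable.trans (Reachable.of_dist_ne_zero (by rw [dist_comm]; omega))
    obtain ⟨q, -, hql⟩ := hzw.exists_path_of_dist
    refine ⟨.cons h q, Walk.isPath_of_length_eq_dist _ ?_, by simp⟩
    rw [Walk.length_cons, hql, dist_comm, ← d, dist_comm]
  obtain ⟨q₁, hq₁, rfl⟩ := geodesic_through h₁ d₁
  obtain ⟨q₂, hq₂, rfl⟩ := geodesic_through h₂ d₂
  obtain rfl : q₁ = q₂ :=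
    congrArg Subtype.val ((hG.subsingleton_path x w).elim ⟨q₁, hq₁⟩ ⟨q₂, hq₂⟩)
  rfl

theorem IsTree.dist_eq_add_one_or_of_adj (hT : G.IsTree) (w : V) {x z : V} (h : G.Adj x z) :
    G.dist w x = G.dist w z + 1 ∨ G.dist w z = G.dist w x + 1 := by
  obtain ⟨q, hq, hql⟩ := hT.connected.exists_path_of_dist w z
  by_cases hx : x ∈ q.support
  · have := hT.isAcyclic.dist_add_dist_of_mem_support hq hx
    have := dist_eq_one_iff_adj.mpr h
    omega
  · left
    rw [← hT.isAcyclic.length_eq_dist_of_isPath (hq.concat hx h.symm), Walk.length_concat,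
      hql]

theorem IsTree.exists_adj_dist_eq_add_one (hT : G.IsTree) {w x : V} (hxw : x ≠ w) :
    ∃ z, G.Adj x z ∧ G.dist w x = G.dist w z + 1 := by
  obtain ⟨q, hq, hql⟩ := hT.connected.exists_path_of_dist x w
  cases q with
  | nil => exact absurd rfl hxw
  | cons h q =>
    refine ⟨_, h, ?_⟩
    rw [dist_comm, ← hql, Walk.length_cons, hT.isAcyclic.length_eq_dist_of_isPath hq.of_cons,
      dist_comm]

theorem IsTree.separates_of_dist_add_dist (hT : G.IsTree) {a x w : V}
    (h : G.dist x a + G.dist a w = G.dist x w) : G.Separates a x w := fun q => by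
  obtain ⟨q₁, -, hq₁⟩ := hT.connected.exists_path_of_dist x a
  obtain ⟨q₂, -, hq₂⟩ := hT.connected.exists_path_of_dist a w
  have hpath : (q₁.append q₂).IsPath :=
    Walk.isPath_of_length_eq_dist _ (by rw [Walk.length_append, hq₁, hq₂, h])
  have hbypass : q.bypass = q₁.append q₂ := congrArg Subtype.val
    ((hT.isAcyclic.subsingleton_path x w).elim ⟨_, q.bypass_isPath⟩ ⟨_, hpath⟩)
  apply q.support_bypass_subset_support
  rw [hbypass, Walk.mem_support_append_iff]
  exact Or.inr q₂.start_mem_support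

section Ray

variable {γ : ℕ → V} (hγ : ∀ m n, m ≤ n → G.dist (γ m) (γ n) = n - m)
include hγ

theorem IsTree.dist_ray_eq (hT : G.IsTree) {y : V} {j : ℕ}
    (hj : ∀ n, G.dist y (γ j) ≤ G.dist y (γ n)) {N : ℕ} (hjN : j ≤ N) :
    G.dist y (γ N) = G.dist y (γ j) + (N - j) := by
  have hadj (n : ℕ) : G.Adj (γ n) (γ (n + 1)) := by
    rw [← dist_eq_one_iff_adj, hγ n (n + 1) (by omega)]
    omega
  have hne (n : ℕ) : γ n ≠ γ (n + 2) := fun h => by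
    have := hγ n (n + 2) (by omega)
    rw [h, dist_self] at this
    omega
  -- `γ (n + 1)` has only one neighbour closer to `y`, so `d(y, γ ·)` has no strict local maximum.
  have no_peak (n : ℕ) (h : G.dist y (γ (n + 1)) = G.dist y (γ n) + 1) :
      G.dist y (γ (n + 2)) = G.dist y (γ (n + 1)) + 1 :=
    (hT.dist_eq_add_one_or_of_adj y (hadj (n + 1))).resolve_left fun h' =>
      hne n (hT.isAcyclic.eq_of_adj_of_dist_eq_add_one (hadj n).symm (hadj (n + 1)) h h')
  have hincr (m : ℕ) : G.dist y (γ (j + m + 1)) = G.dist y (γ (j + m)) + 1 := by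
    induction m with
    | zero =>
      have := hj (j + 1)
      exact (hT.dist_eq_add_one_or_of_adj y (hadj j)).resolve_left (by omega)
    | succ m ih => exact no_peak (j + m) ih
  obtain ⟨m, rfl⟩ := Nat.exists_eq_add_of_le hjN
  induction m with
  | zero => simp
  | succ m ih =>
    rw [← add_assoc, hincr, ih (by omega)]
    omega

theorem IsTree.separates_ray (hT : G.IsTree) {y : V} {j : ℕ}
    (hj : ∀ n, G.dist y (γ j) ≤ G.dist y (γ n)) {N : ℕ} (hjN : j ≤ N) :
    G.Separates (γ j) y (γ N) :=
  hT.separates_of_dist_add_dist (by rw [hγ j N hjN, hT.dist_ray_eq hγ hj hjN])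

theorem IsTree.separates_ray_of_le (hT : G.IsTree) {i j N : ℕ} (hij : i ≤ j) (hjN : j ≤ N) :
    G.Separates (γ j) (γ i) (γ N) :=
  hT.separates_of_dist_add_dist (by rw [hγ i j hij, hγ j N hjN, hγ i N (hij.trans hjN)]; omega)

end Ray

end SimpleGraph

open SimpleGraph

section RandomWalk

variable {S : Type*} {G : SimpleGraph S} [∀ x, Fintype (G.neighborSet x)] {p : S → S → ℝ}

theorem pn_nonneg (hp : ∀ x y, 0 ≤ p x y) (n : ℕ) (x y : S) : 0 ≤ pn p n x y := by
  induction n generalizing x with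
  | zero => unfold pn; split_ifs <;> norm_num
  | succ n ih => exact tsum_nonneg fun z => mul_nonneg (hp x z) (ih z)

theorem tsum_mul_eq_sum_neighborFinset (hp_zero : ∀ x y, ¬ G.Adj x y → p x y = 0) (x : S)
    (f : S → ℝ) : ∑' y, p x y * f y = ∑ y ∈ G.neighborFinset x, p x y * f y :=
  tsum_eq_sum fun y hy => by rw [hp_zero x y (by simpa using hy), zero_mul]

theorem pn_succ_eq_sum (hp_zero : ∀ x y, ¬ G.Adj x y → p x y = 0) (n : ℕ) (x y : S) :
    pn p (n + 1) x y = ∑ z ∈ G.neighborFinset x, p x z * pn p n z y :=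
  tsum_mul_eq_sum_neighborFinset hp_zero x _

theorem pn_le_pow_mul (hp : ∀ x y, 0 ≤ p x y) (hp_zero : ∀ x y, ¬ G.Adj x y → p x y = 0)
    {ρ : ℝ} (hρ : 0 ≤ ρ) {h : S → ℝ} {y : S} (hh : ∀ x, 0 ≤ h x) (hy : 1 ≤ h y)
    (hsuper : ∀ x, ∑ z ∈ G.neighborFinset x, p x z * h z ≤ ρ * h x) (n : ℕ) (x : S) :
    pn p n x y ≤ ρ ^ n * h x := by
  induction n generalizing x with
  | zero =>
    rw [pow_zero, one_mul]
    unfold pn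
    split_ifs with hxy
    · exact hxy ▸ hy
    · exact hh x
  | succ n ih =>
    calc pn p (n + 1) x y = ∑ z ∈ G.neighborFinset x, p x z * pn p n z y :=
          pn_succ_eq_sum hp_zero n x y
      _ ≤ ∑ z ∈ G.neighborFinset x, p x z * (ρ ^ n * h z) :=
          sum_le_sum fun z _ => mul_le_mul_of_nonneg_left (ih z) (hp x z)
      _ = ρ ^ n * ∑ z ∈ G.neighborFinset x, p x z * h z := by
          rw [mul_sum]
          exact sum_congr rfl fun z _ => by ring
      _ ≤ ρ ^ n * (ρ * h x) := mul_le_mul_of_nonneg_left (hsuper x) (pow_nonneg hρ n)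
      _ = ρ ^ (n + 1) * h x := by ring

theorem pn_length_pos (hp_pos : ∀ x y, G.Adj x y → 0 < p x y) (hp : ∀ x y, 0 ≤ p x y)
    (hp_zero : ∀ x y, ¬ G.Adj x y → p x y = 0) {x y : S} (q : G.Walk x y) :
    0 < pn p q.length x y := by
  induction q with
  | nil => simp [pn]
  | cons h q ih =>
    rw [Walk.length_cons, pn_succ_eq_sum hp_zero]
    exact (mul_pos (hp_pos _ _ h) ih).trans_le <| single_le_sum
      (fun z _ => mul_nonneg (hp _ z) (pn_nonneg hp _ z _)) (by simpa using h)

theorem green_pos (hp_pos : ∀ x y, G.Adj x y → 0 < p x y) (hp : ∀ x y, 0 ≤ p x y)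
    (hp_zero : ∀ x y, ¬ G.Adj x y → p x y = 0) {x y : S} (hsum : Summable fun n => pn p n x y)
    (hxy : G.Reachable x y) : 0 < green p x y := by
  obtain ⟨q⟩ := hxy
  exact (pn_length_pos hp_pos hp hp_zero q).trans_le
    (hsum.le_tsum _ fun m _ => pn_nonneg hp m x y)

theorem green_eq_sum_of_ne (hp_zero : ∀ x y, ¬ G.Adj x y → p x y = 0) {w : S}
    (hsum : ∀ z, Summable fun n => pn p n z w) {x : S} (hxw : x ≠ w) :
    green p x w = ∑ z ∈ G.neighborFinset x, p x z * green p z w := by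
  have h0 : pn p 0 x w = 0 := if_neg hxw
  rw [green, (hsum x).tsum_eq_zero_add, h0, zero_add]
  simp_rw [pn_succ_eq_sum hp_zero]
  rw [Summable.tsum_finsetSum fun z _ => (hsum z).mul_left _]
  simp_rw [tsum_mul_left, green]

variable (G p) in
/-- The probability that the walk from `x` visits `a` for the first time at time `n`. -/
def firstHit (a : S) : ℕ → S → ℝ
  | 0, x => if x = a then 1 else 0
  | n + 1, x => if x = a then 0 else ∑ z ∈ G.neighborFinset x, p x z * firstHit a n z

theorem firstHit_nonneg (hp : ∀ x y, 0 ≤ p x y) (a : S) (n : ℕ) (x : S) :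
    0 ≤ firstHit G p a n x := by
  induction n generalizing x with
  | zero => unfold firstHit; split_ifs <;> norm_num
  | succ n ih =>
    unfold firstHit
    split_ifs
    · exact le_rfl
    · exact sum_nonneg fun z _ => mul_nonneg (hp x z) (ih z)

theorem firstHit_le_pn (hp : ∀ x y, 0 ≤ p x y) (hp_zero : ∀ x y, ¬ G.Adj x y → p x y = 0)
    (a : S) (n : ℕ) (x : S) : firstHit G p a n x ≤ pn p n x a := by
  induction n generalizing x with
  | zero => rfl
  | succ n ih =>
    unfold firstHit
    split_ifs
    · exact pn_nonneg hp _ x a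
    · rw [pn_succ_eq_sum hp_zero]
      exact sum_le_sum fun z _ => mul_le_mul_of_nonneg_left (ih z) (hp x z)

theorem pn_eq_sum_firstHit_mul (hp_zero : ∀ x y, ¬ G.Adj x y → p x y = 0) {a w : S} (n : ℕ)
    {x : S} (hsep : G.Separates a x w) :
    pn p n x w = ∑ m ∈ range (n + 1), firstHit G p a m x * pn p (n - m) a w := by
  induction n generalizing x with
  | zero =>
    by_cases hxa : x = a
    · subst hxa
      simp [firstHit]
    · have hxw : x ≠ w := by
        rintro rfl
        exact hxa hsep.eq_of_self.symm
      simp [pn, firstHit, hxa, hxw]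
  | succ n ih =>
    by_cases hxa : x = a
    · subst hxa
      rw [sum_eq_single_of_mem 0 (by simp) fun m _ hm => by
        obtain ⟨m, rfl⟩ := Nat.exists_eq_succ_of_ne_zero hm
        simp [firstHit]]
      simp [firstHit]
    · calc pn p (n + 1) x w = ∑ z ∈ G.neighborFinset x, p x z * pn p n z w :=
            pn_succ_eq_sum hp_zero n x w
        _ = ∑ z ∈ G.neighborFinset x, ∑ m ∈ range (n + 1),
              p x z * (firstHit G p a m z * pn p (n - m) a w) :=
            sum_congr rfl fun z hz => by
              rw [ih (hsep.of_adj hxa (by simpa using hz)), mul_sum]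
        _ = ∑ m ∈ range (n + 1), firstHit G p a (m + 1) x * pn p (n - m) a w := by
            rw [sum_comm]
            refine sum_congr rfl fun m _ => ?_
            rw [firstHit, if_neg hxa, sum_mul]
            exact sum_congr rfl fun z _ => by ring
        _ = ∑ m ∈ range (n + 1 + 1), firstHit G p a m x * pn p (n + 1 - m) a w := by
            have h0 : firstHit G p a 0 x = 0 := if_neg hxa
            conv_rhs => rw [sum_range_succ', h0, zero_mul, add_zero]
            simp only [Nat.add_sub_add_right]

theorem green_eq_tsum_firstHit_mul (hp : ∀ x y, 0 ≤ p x y)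
    (hp_zero : ∀ x y, ¬ G.Adj x y → p x y = 0) {a w x : S}
    (hxa : Summable fun n => pn p n x a) (haw : Summable fun n => pn p n a w)
    (hsep : G.Separates a x w) :
    green p x w = (∑' n, firstHit G p a n x) * green p a w := by
  have hF : Summable fun n => firstHit G p a n x :=
    .of_nonneg_of_le (firstHit_nonneg hp a · x) (firstHit_le_pn hp hp_zero a · x) hxa
  rw [green, green, hF.tsum_mul_tsum_eq_tsum_sum_range haw
    (hF.mul_of_nonneg haw (firstHit_nonneg hp a · x) (pn_nonneg hp · a w))]
  exact tsum_congr fun n => pn_eq_sum_firstHit_mul hp_zero n hsep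

theorem green_div_green_eq_of_separates (hp : ∀ x y, 0 ≤ p x y)
    (hp_zero : ∀ x y, ¬ G.Adj x y → p x y = 0) (hsum : ∀ u v, Summable fun n => pn p n u v)
    (hpos : ∀ u v, 0 < green p u v) {a x y w : S} (hx : G.Separates a x w)
    (hy : G.Separates a y w) :
    green p x a / green p y a = green p x w / green p y w := by
  have factor {u : S} (hu : G.Separates a u w) :
      green p u w * green p a a = green p u a * green p a w := by
    rw [green_eq_tsum_firstHit_mul hp hp_zero (hsum u a) (hsum a w) hu,
      green_eq_tsum_firstHit_mul hp hp_zero (hsum u a) (hsum a a) (separates_self_right a u)]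
    ring
  rw [div_eq_div_iff (hpos y a).ne' (hpos y w).ne']
  refine mul_right_cancel₀ (hpos a a).ne' ?_
  linear_combination green p x a * factor hy - green p y a * factor hx

theorem SimpleGraph.IsTree.sum_mul_pow_dist_le (hT : G.IsTree)
    (hp_sum : ∀ x, ∑ y ∈ G.neighborFinset x, p x y = 1) {η : ℝ} (hη : 0 ≤ η) (hη' : η ≤ 1 / 2)
    (hp_le : ∀ x y, G.Adj x y → p x y ≤ 1 / 2 - η) (y x : S) :
    ∑ z ∈ G.neighborFinset x, p x z * (1 - 2 * η) ^ G.dist y z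
      ≤ (1 - 2 * η ^ 2) * (1 - 2 * η) ^ G.dist y x := by
  obtain rfl | hxy := eq_or_ne x y
  · calc ∑ z ∈ G.neighborFinset x, p x z * (1 - 2 * η) ^ G.dist x z
          = ∑ z ∈ G.neighborFinset x, p x z * (1 - 2 * η) :=
            sum_congr rfl fun z hz => by
              rw [dist_eq_one_iff_adj.mpr ((mem_neighborFinset G x z).mp hz), pow_one]
      _ = 1 - 2 * η := by rw [← sum_mul, hp_sum, one_mul]
      _ ≤ (1 - 2 * η ^ 2) * (1 - 2 * η) ^ G.dist x x := by
            rw [dist_self, pow_zero, mul_one]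
            nlinarith
  obtain ⟨z₀, hz₀, hd⟩ := hT.exists_adj_dist_eq_add_one hxy
  have hz₀' : z₀ ∈ G.neighborFinset x := (mem_neighborFinset G x z₀).mpr hz₀
  have hfar : ∀ z ∈ (G.neighborFinset x).erase z₀, G.dist y z = G.dist y z₀ + 2 := by
    intro z hz
    obtain ⟨hzz₀, hz⟩ := mem_erase.mp hz
    have hadj := (mem_neighborFinset G x z).mp hz
    have := (hT.dist_eq_add_one_or_of_adj y hadj).resolve_left fun h =>
      hzz₀ (hT.isAcyclic.eq_of_adj_of_dist_eq_add_one hadj hz₀ h hd)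
    omega
  set t := p x z₀
  set l := 1 - 2 * η
  have ht := hp_le x z₀ hz₀
  -- `t + (1 - t) l² ≤ (1 - 2η²) l` is `2η(1 - η)(l - 2t) ≥ 0`.
  have drift : t + (1 - t) * l ^ 2 ≤ (1 - 2 * η ^ 2) * l := by
    nlinarith [mul_nonneg (mul_nonneg hη (by linarith : (0 : ℝ) ≤ 1 - η))
      (by linarith : (0 : ℝ) ≤ l - 2 * t)]
  rw [← add_sum_erase _ _ hz₀', sum_congr rfl fun z hz => by rw [hfar z hz], ← sum_mul,
    sum_erase_eq_sub hz₀', hp_sum, hd]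
  calc t * l ^ G.dist y z₀ + (1 - t) * l ^ (G.dist y z₀ + 2)
      = l ^ G.dist y z₀ * (t + (1 - t) * l ^ 2) := by ring
    _ ≤ l ^ G.dist y z₀ * ((1 - 2 * η ^ 2) * l) :=
        mul_le_mul_of_nonneg_left drift (pow_nonneg (by linarith) _)
    _ = (1 - 2 * η ^ 2) * l ^ (G.dist y z₀ + 1) := by ring

theorem SimpleGraph.IsTree.summable_pn (hT : G.IsTree) (hp : ∀ x y, 0 ≤ p x y)
    (hp_zero : ∀ x y, ¬ G.Adj x y → p x y = 0)
    (hp_sum : ∀ x, ∑ y ∈ G.neighborFinset x, p x y = 1) {η : ℝ} (hη : 0 < η) (hη' : η ≤ 1 / 2)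
    (hp_le : ∀ x y, G.Adj x y → p x y ≤ 1 / 2 - η) (x y : S) :
    Summable fun n => pn p n x y :=
  .of_nonneg_of_le (pn_nonneg hp · x y)
    (pn_le_pow_mul hp hp_zero (by nlinarith) (fun _ => pow_nonneg (by linarith) _)
      (by rw [SimpleGraph.dist_self, pow_zero])
      (hT.sum_mul_pow_dist_le hp_sum hη.le hη' hp_le y) · x)
    ((summable_geometric_of_lt_one (by nlinarith) (by nlinarith)).mul_right _)

end RandomWalk

/-- Under hypothesis (H), the Martin kernel
`K(x) = G(x,π(x))/G(o,π(x))` along a geodesic ray `γ` from `o` (with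
projection `π(x) = γ (k x)`) is a positive harmonic function with `K(o) = 1`. -/
theorem martin_kernel_positive_harmonic
    {S : Type*} [Countable S] (G : SimpleGraph S)
    [∀ x : S, Fintype (G.neighborSet x)]
    (hconn : G.Connected) (hacyc : G.IsAcyclic)
    (p : S → S → ℝ)
    (hp_pos : ∀ x y, 0 < p x y ↔ G.Adj x y)
    (hp_zero : ∀ x y, ¬ G.Adj x y → p x y = 0)
    (hp_sum : ∀ x, ∑ y ∈ G.neighborFinset x, p x y = 1)
    (ε η : ℝ) (hε : 0 < ε) (hη : 0 < η)
    (hH : ∀ x y, G.Adj x y → ε ≤ p x y ∧ p x y ≤ 1 / 2 - η)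
    (o : S) (γ : ℕ → S) (hγ0 : γ 0 = o)
    (hγ : ∀ m n : ℕ, (G.dist (γ m) (γ n) : ℤ) = |(m : ℤ) - (n : ℤ)|)
    (k : S → ℕ)
    (hk_min : ∀ (x : S) (n : ℕ), G.dist x (γ (k x)) ≤ G.dist x (γ n))
    (hk_uniq : ∀ (x : S) (n : ℕ), G.dist x (γ n) ≤ G.dist x (γ (k x)) → n = k x)
    (K : S → ℝ) (hK : ∀ x, K x = green p x (γ (k x)) / green p o (γ (k x))) :
    K o = 1 ∧ ∀ x : S, 0 < K x ∧ ∑' y, p x y * K y = K x := by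
  have hT : G.IsTree := ⟨hconn, hacyc⟩
  have hp x y : 0 ≤ p x y := by
    by_cases h : G.Adj x y
    exacts [((hp_pos x y).2 h).le, (hp_zero x y h).ge]
  have hη' : η ≤ 1 / 2 := by
    obtain ⟨y, hy⟩ := nonempty_of_sum_ne_zero (by rw [hp_sum o]; exact one_ne_zero)
    have hadj := (mem_neighborFinset G o y).mp hy
    linarith [(hp_pos o y).2 hadj, (hH o y hadj).2]
  have hsum := hT.summable_pn hp hp_zero hp_sum hη hη' fun x y h => (hH x y h).2
  have hgreen x y : 0 < green p x y :=
    green_pos (fun x y => (hp_pos x y).2) hp hp_zero (hsum x y) (hconn x y)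
  have hray m n (hmn : m ≤ n) : G.dist (γ m) (γ n) = n - m := by
    have := hγ m n
    rw [abs_of_nonpos (by omega)] at this
    omega
  refine ⟨by rw [hK]; exact div_self (hgreen _ _).ne', fun x => ⟨?_, ?_⟩⟩
  · rw [hK]
    exact div_pos (hgreen _ _) (hgreen _ _)
  set N := max (k x + 1) ((G.neighborFinset x).sup k)
  have hKN y (hy : k y ≤ N) : K y = green p y (γ N) / green p o (γ N) := by
    rw [hK, green_div_green_eq_of_separates hp hp_zero hsum hgreen
      (hT.separates_ray hray (hk_min y) hy) (hγ0 ▸ hT.separates_ray_of_le hray (Nat.zero_le _) hy)]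
  have hxN : x ≠ γ N := fun h => by
    have := hT.dist_ray_eq hray (hk_min x) (N := N) (by omega)
    rw [← h, SimpleGraph.dist_self] at this
    omega
  rw [tsum_mul_eq_sum_neighborFinset hp_zero, hKN x (by omega),
    green_eq_sum_of_ne hp_zero (hsum · _) hxN, sum_div]
  exact sum_congr rfl fun z hz => by
    rw [hKN z ((le_sup hz).trans (le_max_right _ _)), mul_div_assoc]

end
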